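/- Let I be a finite index set and S = {(x_i, g_i, f_i)}_{i ∈ I} ⊂ ℝ^d × ℝ^d × ℝ. If there exists a function f ∈ F^coord_{0,L}(ℝ^d) with ∇f(x_i) = g_i and f(x_i) = f_i for all i ∈ I (i.e., S is F^coord_{0,L}(ℝ^d)-interpolable), then for all i, j ∈ I and every block ℓ ∈ {1,…,p}: f_i ≥ f_j + Σ_{s=1}^p ⟨g_j^{(s)}, x_i^{(s)} − x_j^{(s)}⟩ + (1/(2L_ℓ))‖g_i^{(ℓ)} − g_j^{(ℓ)}‖². -/

import Mathlib

open RealInnerProductSpace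

noncomputable section

/-- The `ℓ`-th block `ℝ^{d_ℓ}` of the decomposition `ℝ^d = ℝ^{d_1} × … × ℝ^{d_p}`. -/
abbrev Blk {p : ℕ} (d : Fin p → ℕ) (ℓ : Fin p) : Type := EuclideanSpace ℝ (Fin (d ℓ))

/-- The space `ℝ^d = ℝ^{d_1} × … × ℝ^{d_p}` with the Euclidean (ℓ²) norm. -/
abbrev Sp {p : ℕ} (d : Fin p → ℕ) : Type := PiLp 2 (Blk d)

/-- The selection embedding `U_ℓ : ℝ^{d_ℓ} → ℝ^d` placing `h` in block `ℓ` and `0` elsewhere. -/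
def inj {p : ℕ} (d : Fin p → ℕ) (ℓ : Fin p) (h : Blk d ℓ) : Sp d :=
  (WithLp.equiv 2 (∀ ℓ, Blk d ℓ)).symm (Pi.single ℓ h)

/-- Membership in the class `F^coord_{0,L}(ℝ^d)`: convex, differentiable, and for each block
`ℓ` the partial gradient `∇^{(ℓ)} f` is `L_ℓ`-Lipschitz along the block `ℓ`. -/
def IsCoordSmooth {p : ℕ} (d : Fin p → ℕ) (L : Fin p → ℝ) (f : Sp d → ℝ) : Prop :=
  ConvexOn ℝ Set.univ f ∧ Differentiable ℝ f ∧
    ∀ (ℓ : Fin p) (x : Sp d) (h : Blk d ℓ),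
      ‖gradient f (x + inj d ℓ h) ℓ - gradient f x ℓ‖ ≤ L ℓ * ‖h‖

/-!
Convexity gives the first-order lower bound `f z ≥ f x_j + ⟪g_j, z - x_j⟫`, and the Lipschitz
bound on the `ℓ`-th partial gradient gives the block descent lemma
`f (x_i + U_ℓ h) ≤ f x_i + ⟪g_i^(ℓ), h⟫ + L_ℓ / 2 * ‖h‖²`. Chaining both at
`z = x_i + U_ℓ h` for the block gradient step `h = (g_j^(ℓ) - g_i^(ℓ)) / L_ℓ` gives the claim.
-/

section Calculus

open Set

theorem le_add_deriv_add_half_of_deriv_le {φ φ' : ℝ → ℝ} {c : ℝ}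
    (hφ : ∀ t ∈ Icc (0 : ℝ) 1, HasDerivAt φ (φ' t) t)
    (hφ' : ∀ t ∈ Ico (0 : ℝ) 1, φ' t ≤ φ' 0 + c * t) :
    φ 1 ≤ φ 0 + φ' 0 + c / 2 := by
  set ψ : ℝ → ℝ := fun t ↦ φ t - φ' 0 * t - c * t ^ 2 / 2
  have hψ : ∀ t ∈ Icc (0 : ℝ) 1, HasDerivAt ψ (φ' t - φ' 0 - c * t) t := fun t ht ↦ by
    refine (((hφ t ht).sub ((hasDerivAt_id' t).const_mul (φ' 0))).sub
      (((hasDerivAt_pow 2 t).const_mul c).div_const 2)).congr_deriv ?_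
    norm_num
    ring
  have hanti : AntitoneOn ψ (Icc 0 1) := by
    refine antitoneOn_of_deriv_nonpos (convex_Icc 0 1)
      (fun t ht ↦ (hψ t ht).continuousAt.continuousWithinAt) (fun t ht ↦ ?_) (fun t ht ↦ ?_)
    all_goals rw [interior_Icc] at ht
    · exact (hψ t (Ioo_subset_Icc_self ht)).differentiableAt.differentiableWithinAt
    · rw [(hψ t (Ioo_subset_Icc_self ht)).deriv]
      linarith [hφ' t (Ioo_subset_Ico_self ht)]
  have h01 := hanti (left_mem_Icc.2 zero_le_one) (right_mem_Icc.2 zero_le_one) zero_le_one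
  simp only [ψ] at h01
  linarith

variable {E : Type*} [NormedAddCommGroup E] [InnerProductSpace ℝ E] [CompleteSpace E]

theorem hasDerivAt_comp_add_smul {f : E → ℝ} (hf : Differentiable ℝ f) (x v : E) (t : ℝ) :
    HasDerivAt (fun t : ℝ ↦ f (x + t • v)) ⟪gradient f (x + t • v), v⟫ t := by
  have hline : HasDerivAt (fun t : ℝ ↦ x + t • v) v t := by
    simpa using ((hasDerivAt_id t).smul_const v).const_add x
  rw [inner_gradient_left]
  exact (hf _).hasFDerivAt.comp_hasDerivAt t hline

theorem ConvexOn.add_inner_gradient_le {f : E → ℝ} (hconv : ConvexOn ℝ univ f)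
    (hf : Differentiable ℝ f) (x y : E) : f x + ⟪gradient f x, y - x⟫ ≤ f y := by
  have hline : ConvexOn ℝ univ (fun t : ℝ ↦ f (x + t • (y - x))) := by
    have hcomp : (fun t : ℝ ↦ f (x + t • (y - x))) = f ∘ AffineMap.lineMap x y := by
      ext t
      rw [Function.comp_apply, AffineMap.lineMap_apply_module', add_comm]
    simpa [hcomp] using hconv.comp_affineMap (AffineMap.lineMap x y)
  have hderiv := hasDerivAt_comp_add_smul hf x (y - x) 0
  rw [zero_smul, add_zero] at hderiv
  have hslope := hline.le_slope_of_hasDerivAt (mem_univ 0) (mem_univ 1) zero_lt_one hderiv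
  have h01 : slope (fun t : ℝ ↦ f (x + t • (y - x))) 0 1 = f y - f x := by simp [slope]
  linarith

theorem apply_add_le_of_inner_gradient_sub_le {f : E → ℝ} (hf : Differentiable ℝ f) {x v : E} {c : ℝ}
    (h : ∀ t ∈ Ico (0 : ℝ) 1, ⟪gradient f (x + t • v) - gradient f x, v⟫ ≤ c * t) :
    f (x + v) ≤ f x + ⟪gradient f x, v⟫ + c / 2 := by
  have := le_add_deriv_add_half_of_deriv_le (φ := fun t ↦ f (x + t • v)) (c := c)
    (fun t _ ↦ hasDerivAt_comp_add_smul hf x v t) (fun t ht ↦ by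
      simpa only [zero_smul, add_zero, inner_sub_left, sub_le_iff_le_add', add_comm] using h t ht)
  simpa only [one_smul, zero_smul, add_zero] using this

end Calculus

section Blocks

variable {p : ℕ} {d : Fin p → ℕ}

theorem inj_eq_single (ℓ : Fin p) (h : Blk d ℓ) : inj d ℓ h = PiLp.single 2 ℓ h := rfl

theorem inner_inj_right (v : Sp d) (ℓ : Fin p) (h : Blk d ℓ) : ⟪v, inj d ℓ h⟫ = ⟪v ℓ, h⟫ := by
  rw [PiLp.inner_apply, Finset.sum_eq_single ℓ (fun s _ hs ↦ by simp [inj_eq_single, hs])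
    (by simp), inj_eq_single, PiLp.single_eq_same]

theorem inj_smul (ℓ : Fin p) (t : ℝ) (h : Blk d ℓ) : inj d ℓ (t • h) = t • inj d ℓ h := by
  ext s
  simp [inj, Pi.single_smul]

theorem apply_add_inj_le {f : Sp d → ℝ} (hf : Differentiable ℝ f) {ℓ : Fin p} {K : ℝ}
    (hlip : ∀ (x : Sp d) (h : Blk d ℓ),
      ‖gradient f (x + inj d ℓ h) ℓ - gradient f x ℓ‖ ≤ K * ‖h‖)
    (x : Sp d) (h : Blk d ℓ) :
    f (x + inj d ℓ h) ≤ f x + ⟪gradient f x ℓ, h⟫ + K / 2 * ‖h‖ ^ 2 := by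
  have := apply_add_le_of_inner_gradient_sub_le hf (x := x) (v := inj d ℓ h) (c := K * ‖h‖ ^ 2)
    fun t ht ↦ calc
      _ = ⟪gradient f (x + inj d ℓ (t • h)) ℓ - gradient f x ℓ, h⟫ := by
        rw [inner_inj_right, inj_smul]; rfl
      _ ≤ ‖gradient f (x + inj d ℓ (t • h)) ℓ - gradient f x ℓ‖ * ‖h‖ := real_inner_le_norm _ _
      _ ≤ K * ‖t • h‖ * ‖h‖ := by gcongr; exact hlip x (t • h)
      _ = K * ‖h‖ ^ 2 * t := by rw [norm_smul, Real.norm_of_nonneg ht.1]; ring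
  rw [inner_inj_right] at this
  linarith

theorem IsCoordSmooth.add_inner_gradient_add_sq_le {L : Fin p → ℝ} {f : Sp d → ℝ}
    (hf : IsCoordSmooth d L f) {ℓ : Fin p} (hL : 0 < L ℓ) (x y : Sp d) :
    f x + ⟪gradient f x, y - x⟫ + 1 / (2 * L ℓ) * ‖gradient f y ℓ - gradient f x ℓ‖ ^ 2
      ≤ f y := by
  obtain ⟨hconv, hdiff, hlip⟩ := hf
  set u := gradient f x ℓ - gradient f y ℓ
  have hlower := hconv.add_inner_gradient_le hdiff x (y + inj d ℓ ((L ℓ)⁻¹ • u))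
  have hupper := apply_add_inj_le hdiff (hlip ℓ) y ((L ℓ)⁻¹ • u)
  rw [add_sub_right_comm, inner_add_right, inner_inj_right] at hlower
  have hstep : ⟪gradient f x ℓ, (L ℓ)⁻¹ • u⟫ - ⟪gradient f y ℓ, (L ℓ)⁻¹ • u⟫
      - L ℓ / 2 * ‖(L ℓ)⁻¹ • u‖ ^ 2 = 1 / (2 * L ℓ) * ‖u‖ ^ 2 := by
    rw [← inner_sub_left, real_inner_smul_right, real_inner_self_eq_norm_sq, norm_smul,
      Real.norm_of_nonneg (inv_nonneg.2 hL.le)]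
    field_simp
    ring
  rw [norm_sub_rev]
  linarith

end Blocks

theorem necessary_interpolation_conditions_general {p : ℕ} {d : Fin p → ℕ}
    (L : Fin p → ℝ) (hL : ∀ ℓ, 0 < L ℓ) {I : Type*}
    (x g : I → Sp d) (F : I → ℝ)
    (hinterp : ∃ f : Sp d → ℝ, IsCoordSmooth d L f ∧
      ∀ i, gradient f (x i) = g i ∧ f (x i) = F i) :
    ∀ (i j : I) (ℓ : Fin p),
      F i ≥ F j + (∑ s : Fin p, ⟪g j s, x i s - x j s⟫)
        + 1 / (2 * L ℓ) * ‖g i ℓ - g j ℓ‖ ^ 2 := by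
  obtain ⟨f, hf, hfit⟩ := hinterp
  intro i j ℓ
  have := hf.add_inner_gradient_add_sq_le (hL ℓ) (x j) (x i)
  rw [(hfit i).1, (hfit i).2, (hfit j).1, (hfit j).2, PiLp.inner_apply] at this
  simpa using this

theorem necessary_interpolation_conditions {p : ℕ} {d : Fin p → ℕ}
    (L : Fin p → ℝ) (hL : ∀ ℓ, 0 < L ℓ) {I : Type*} [Finite I]
    (x g : I → Sp d) (F : I → ℝ)
    (hinterp : ∃ f : Sp d → ℝ, IsCoordSmooth d L f ∧
      ∀ i, gradient f (x i) = g i ∧ f (x i) = F i) :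
    ∀ (i j : I) (ℓ : Fin p),
      F i ≥ F j + (∑ s : Fin p, ⟪g j s, x i s - x j s⟫)
        + 1 / (2 * L ℓ) * ‖g i ℓ - g j ℓ‖ ^ 2 :=
  necessary_interpolation_conditions_general L hL x g F hinterp
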